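/- For any set A ⊆ ℕ and any s ∈ (0,1] such that there is a computable set R of density s: if h is an increasing computable function with range R and B = h(A), then for every t ∈ [0,1], A is coarsely computable at density t if and only if B is coarsely computable at density s·t + (1 − s). Consequently γ(B) = s·γ(A) + (1 − s). -/

import Mathlib

open Filter Topology
open scoped symmDiff Classical

/-- ρ_n(A): the density of A below n. -/
noncomputable def partialDensity (A : Set ℕ) (n : ℕ) : ℝ :=
  ((Finset.range n).filter (fun k => k ∈ A)).card / n

/-- Lower density ρ̲(A). -/
noncomputable def lowerDensity (A : Set ℕ) : ℝ := liminf (partialDensity A) atTop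

/-- Upper density ρ̄(A). -/
noncomputable def upperDensity (A : Set ℕ) : ℝ := limsup (partialDensity A) atTop

/-- A has density r. -/
def HasDensity (A : Set ℕ) (r : ℝ) : Prop := Tendsto (partialDensity A) atTop (𝓝 r)

/-- A set of naturals is computable. -/
def IsComputableSet (A : Set ℕ) : Prop := ComputablePred (· ∈ A)

/-- A is coarsely computable at density r. -/
def CoarselyComputableAt (A : Set ℕ) (r : ℝ) : Prop :=
  ∃ C : Set ℕ, IsComputableSet C ∧ r ≤ lowerDensity {n | n ∈ A ↔ n ∈ C}

/-- γ(A), the coarse computability bound. -/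
noncomputable def gammaBound (A : Set ℕ) : ℝ := sSup {r | CoarselyComputableAt A r}

/-- A is partially computable at density r. -/
def PartiallyComputableAt (A : Set ℕ) (r : ℝ) : Prop :=
  ∃ φ : ℕ →. Bool, Partrec φ ∧ (∀ n b, b ∈ φ n → (b = true ↔ n ∈ A)) ∧
    r ≤ lowerDensity φ.Dom

/-- α(A), the partial computability bound. -/
noncomputable def alphaBound (A : Set ℕ) : ℝ := sSup {r | PartiallyComputableAt A r}

/-- A is generically computable. -/
def GenericallyComputable (A : Set ℕ) : Prop := PartiallyComputableAt A 1

/-- A is coarsely computable. -/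
def CoarselyComputable (A : Set ℕ) : Prop :=
  ∃ C : Set ℕ, IsComputableSet C ∧ HasDensity (A ∆ C) 0

/-! If `h` enumerates `R` increasingly and `N n = |R ∩ [0, n)|`, then `h(E) ∩ [0, n)` is the image
of `E ∩ [0, N n)`, so `ρ_n(h(E)) = ρ_n(R) · ρ_{N n}(E)`. As `N` is a monotone surjection onto `ℕ`
this gives `ρ̲(h(E) ∪ Rᶜ) = s · ρ̲(E) + (1 - s)`. Writing `X ▽ Y = {n | n ∈ X ↔ n ∈ Y}`, the
agreement set `h(A) ▽ h(C)` is exactly `h(A ▽ C) ∪ Rᶜ`, and `h(A) ▽ D` lies inside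
`h(A ▽ h⁻¹(D)) ∪ Rᶜ`; `h(C)` and `h⁻¹(D)` are computable along with `C` and `D`. Hence the order
isomorphism `t ↦ s·t + (1 - s)` carries the densities at which `A` is coarsely computable onto
those for `h(A)`, and it commutes with suprema. -/

lemma partialDensity_eq_count (A : Set ℕ) (n : ℕ) :
    partialDensity A n = Nat.count (· ∈ A) n / n := by
  rw [Nat.count_eq_card_filter_range]; rfl

lemma partialDensity_nonneg (A : Set ℕ) (n : ℕ) : 0 ≤ partialDensity A n := by
  rw [partialDensity_eq_count]; positivity

lemma partialDensity_le_one (A : Set ℕ) (n : ℕ) : partialDensity A n ≤ 1 := by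
  rw [partialDensity_eq_count]
  exact div_le_one_of_le₀ (by exact_mod_cast Nat.count_le _) n.cast_nonneg

lemma partialDensity_mono {A B : Set ℕ} (hAB : A ⊆ B) (n : ℕ) :
    partialDensity A n ≤ partialDensity B n := by
  simp only [partialDensity_eq_count]
  gcongr

lemma partialDensity_union {A B : Set ℕ} (hAB : Disjoint A B) (n : ℕ) :
    partialDensity (A ∪ B) n = partialDensity A n + partialDensity B n := by
  simp only [partialDensity, ← add_div, Set.mem_union, Finset.filter_or]
  rw [Finset.card_union_of_disjoint
    (Finset.disjoint_filter.2 fun _ _ hA hB => hAB.ne_of_mem hA hB rfl)]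
  push_cast
  congr

lemma partialDensity_compl (A : Set ℕ) {n : ℕ} (hn : n ≠ 0) :
    partialDensity Aᶜ n = 1 - partialDensity A n := by
  have huniv : partialDensity Set.univ n = 1 := by
    simp [partialDensity_eq_count, hn]
  rw [← huniv, ← Set.union_compl_self A, partialDensity_union disjoint_compl_right]
  ring

lemma lowerDensity_nonneg (A : Set ℕ) : 0 ≤ lowerDensity A :=
  le_liminf_of_le (isBoundedUnder_of ⟨1, partialDensity_le_one A⟩).isCoboundedUnder_ge
    (.of_forall (partialDensity_nonneg A))

lemma lowerDensity_le_one (A : Set ℕ) : lowerDensity A ≤ 1 :=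
  liminf_le_of_frequently_le (.of_forall (partialDensity_le_one A))
    (isBoundedUnder_of ⟨0, partialDensity_nonneg A⟩)

lemma lowerDensity_mono {A B : Set ℕ} (hAB : A ⊆ B) : lowerDensity A ≤ lowerDensity B :=
  liminf_le_liminf (.of_forall (partialDensity_mono hAB))
    (isBoundedUnder_of ⟨0, partialDensity_nonneg A⟩)
    (isBoundedUnder_of ⟨1, partialDensity_le_one B⟩).isCoboundedUnder_ge

section Liminf

variable {ι : Type*} {f : Filter ι} {u v : ι → ℝ} {a : ℝ}

lemma Filter.Tendsto.liminf_add_left [f.NeBot] (hu : Tendsto u f (𝓝 a))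
    (hv₀ : IsBoundedUnder (· ≥ ·) f v) (hv₁ : IsBoundedUnder (· ≤ ·) f v) :
    liminf (u + v) f = a + liminf v f := by
  apply le_antisymm
  · simpa only [hu.limsup_eq] using liminf_add_le hu.isBoundedUnder_ge hu.isBoundedUnder_le hv₀
      hv₁.isCoboundedUnder_ge
  · simpa only [hu.liminf_eq] using le_liminf_add hu.isBoundedUnder_ge hu.isBoundedUnder_le hv₀
      hv₁.isCoboundedUnder_ge

lemma Filter.Tendsto.liminf_mul_left [f.NeBot] (hu : Tendsto u f (𝓝 a)) (hu₀ : 0 ≤ᶠ[f] u)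
    (hv₀ : 0 ≤ᶠ[f] v) (hv₁ : IsBoundedUnder (· ≤ ·) f v) :
    liminf (u * v) f = a * liminf v f := by
  apply le_antisymm
  · simpa only [hu.limsup_eq] using liminf_mul_le hu₀ hu.isBoundedUnder_le hv₀
      hv₁.isCoboundedUnder_ge
  · simpa only [hu.liminf_eq] using le_liminf_mul hu₀ hu.isBoundedUnder_le hv₀
      hv₁.isCoboundedUnder_ge

end Liminf

lemma isComputableSet_empty : IsComputableSet ∅ :=
  ComputablePred.computable_iff.2 ⟨fun _ => false, Computable.const false, by ext; simp⟩

lemma IsComputableSet.preimage {C : Set ℕ} (hC : IsComputableSet C) {f : ℕ → ℕ}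
    (hf : Computable f) : IsComputableSet (f ⁻¹' C) :=
  let ⟨_, hC⟩ := hC
  ⟨fun k => inferInstanceAs (Decidable (f k ∈ C)), hC.comp hf⟩

namespace StrictMono

variable {h : ℕ → ℕ} (hh : StrictMono h)
include hh

lemma count_range_apply (k : ℕ) : Nat.count (· ∈ Set.range h) (h k) = k := by
  have : (Finset.range (h k)).filter (· ∈ Set.range h) = (Finset.range k).image h := by
    ext j
    simp only [Finset.mem_filter, Finset.mem_range, Finset.mem_image, Set.mem_range]
    constructor
    · rintro ⟨hj, i, rfl⟩
      exact ⟨i, hh.lt_iff_lt.1 hj, rfl⟩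
    · rintro ⟨i, hi, rfl⟩
      exact ⟨hh hi, i, rfl⟩
  rw [Nat.count_eq_card_filter_range, this, Finset.card_image_of_injective _ hh.injective,
    Finset.card_range]

lemma count_range_le_iff (n k : ℕ) : Nat.count (· ∈ Set.range h) n ≤ k ↔ n ≤ h k := by
  constructor
  · intro hn
    by_contra! hlt
    have := Nat.count_monotone (· ∈ Set.range h) hlt
    rw [Nat.count_succ, hh.count_range_apply, if_pos (Set.mem_range_self k)] at this
    omega
  · intro hn
    exact (Nat.count_monotone _ hn).trans_eq (hh.count_range_apply k)

lemma lt_iff_lt_count_range (n k : ℕ) : h k < n ↔ k < Nat.count (· ∈ Set.range h) n := by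
  simpa only [not_le] using (hh.count_range_le_iff n k).not.symm

lemma map_count_range_atTop : map (Nat.count (· ∈ Set.range h)) atTop = atTop :=
  map_atTop_eq_of_gc h 0 (Nat.count_monotone _) (fun n k _ => hh.count_range_le_iff n k)
    (fun k _ => (hh.count_range_apply k).ge)

lemma count_image (E : Set ℕ) (n : ℕ) :
    Nat.count (· ∈ h '' E) n = Nat.count (· ∈ E) (Nat.count (· ∈ Set.range h) n) := by
  have : (Finset.range n).filter (· ∈ h '' E)
      = ((Finset.range (Nat.count (· ∈ Set.range h) n)).filter (· ∈ E)).image h := by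
    ext j
    simp only [Finset.mem_filter, Finset.mem_range, Finset.mem_image, Set.mem_image]
    constructor
    · rintro ⟨hj, k, hk, rfl⟩
      exact ⟨k, ⟨(hh.lt_iff_lt_count_range n k).1 hj, hk⟩, rfl⟩
    · rintro ⟨k, ⟨hk, hkE⟩, rfl⟩
      exact ⟨(hh.lt_iff_lt_count_range n k).2 hk, k, hkE, rfl⟩
  rw [Nat.count_eq_card_filter_range (· ∈ h '' E), this,
    Finset.card_image_of_injective _ hh.injective, ← Nat.count_eq_card_filter_range]

lemma partialDensity_image (E : Set ℕ) (n : ℕ) :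
    partialDensity (h '' E) n
      = partialDensity (Set.range h) n * partialDensity E (Nat.count (· ∈ Set.range h) n) := by
  simp only [partialDensity_eq_count, hh.count_image]
  rcases eq_or_ne (Nat.count (· ∈ Set.range h) n) 0 with h0 | h0
  · rw [h0]; simp
  · rw [mul_comm, div_mul_div_cancel₀ (by exact_mod_cast h0)]

lemma lowerDensity_image_union_compl_range {s : ℝ} (hs : HasDensity (Set.range h) s)
    (E : Set ℕ) :
    lowerDensity (h '' E ∪ (Set.range h)ᶜ) = s * lowerDensity E + (1 - s) := by
  set w := partialDensity (Set.range h)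
  set g := fun n => partialDensity E (Nat.count (· ∈ Set.range h) n)
  have hpd : partialDensity (h '' E ∪ (Set.range h)ᶜ) =ᶠ[atTop] (fun n => 1 - w n) + w * g := by
    filter_upwards [eventually_ne_atTop 0] with n hn
    rw [partialDensity_union (Set.disjoint_compl_right_iff_subset.2 (Set.image_subset_range h E)),
      partialDensity_compl _ hn, hh.partialDensity_image]
    simp only [Pi.add_apply, Pi.mul_apply, w, g]
    ring
  have hg : liminf g atTop = lowerDensity E :=
    (liminf_comp (partialDensity E) _ _).trans (congrArg _ hh.map_count_range_atTop)
  have hwg₀ (n : ℕ) : 0 ≤ (w * g) n :=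
    mul_nonneg (partialDensity_nonneg _ n) (partialDensity_nonneg _ _)
  have hwg₁ (n : ℕ) : (w * g) n ≤ 1 :=
    mul_le_one₀ (partialDensity_le_one _ n) (partialDensity_nonneg _ _) (partialDensity_le_one _ _)
  calc lowerDensity (h '' E ∪ (Set.range h)ᶜ)
      = liminf ((fun n => 1 - w n) + w * g) atTop := liminf_congr hpd
    _ = (1 - s) + s * liminf g atTop := by
      rw [(tendsto_const_nhds.sub hs).liminf_add_left (isBoundedUnder_of ⟨0, hwg₀⟩)
        (isBoundedUnder_of ⟨1, hwg₁⟩), hs.liminf_mul_left (.of_forall (partialDensity_nonneg _))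
        (.of_forall fun _ => partialDensity_nonneg _ _)
        (isBoundedUnder_of ⟨1, fun _ => partialDensity_le_one _ _⟩)]
    _ = s * lowerDensity E + (1 - s) := by rw [hg]; ring

lemma computable_count_range (hc : Computable h) : Computable (Nat.count (· ∈ Set.range h)) := by
  -- `Nat.count (· ∈ Set.range h) n` is the least `k` with `n ≤ h k`, found by unbounded search.
  have hex (n : ℕ) : ∃ k, n ≤ h k := ⟨n, hh.le_apply⟩
  have hle : ComputablePred fun p : ℕ × ℕ => p.1 ≤ h p.2 :=
    (Primrec.nat_le.decide.to_comp.comp Computable.fst (hc.comp Computable.snd)).computablePred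
  refine (Computable.find hle hex).of_eq fun n => le_antisymm ?_ ?_
  · exact Nat.find_le ((hh.count_range_le_iff n _).1 le_rfl)
  · exact (hh.count_range_le_iff n _).2 (Nat.find_spec (hex n))

lemma isComputableSet_image (hc : Computable h) {C : Set ℕ} (hC : IsComputableSet C) :
    IsComputableSet (h '' C) := by
  have hmem (n : ℕ) : h (Nat.count (· ∈ Set.range h) n) = n ∧ Nat.count (· ∈ Set.range h) n ∈ C
      ↔ n ∈ h '' C := by
    refine ⟨fun ⟨hn, hnC⟩ => ⟨_, hnC, hn⟩, ?_⟩
    rintro ⟨k, hk, rfl⟩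
    rw [hh.count_range_apply]
    exact ⟨rfl, hk⟩
  refine ComputablePred.of_eq ?_ hmem
  obtain ⟨_, hC⟩ := hC
  have hN := hh.computable_count_range hc
  refine Computable.computablePred ((Primrec.and.to_comp.comp
    (Primrec.eq.decide.to_comp.comp (hc.comp hN) Computable.id) (hC.comp hN)).of_eq fun n => ?_)
  simp only [Bool.decide_and, id]

end StrictMono

namespace Function.Injective

variable {h : ℕ → ℕ} (hinj : Injective h) (A : Set ℕ)
include hinj

lemma agree_image_image (C : Set ℕ) :
    {n | n ∈ h '' A ↔ n ∈ h '' C} = h '' {k | k ∈ A ↔ k ∈ C} ∪ (Set.range h)ᶜ := by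
  ext n
  by_cases hn : n ∈ Set.range h
  · obtain ⟨k, rfl⟩ := hn
    simp [hinj.mem_set_image, hinj.eq_iff]
  · have hnA : n ∉ h '' A := fun h' => hn (Set.image_subset_range _ _ h')
    have hnC : n ∉ h '' C := fun h' => hn (Set.image_subset_range _ _ h')
    simp only [Set.mem_ofPred_eq, Set.mem_union, Set.mem_compl_iff, hn, not_false_eq_true, or_true,
      iff_true]
    exact iff_of_false hnA hnC

lemma agree_image_subset (D : Set ℕ) :
    {n | n ∈ h '' A ↔ n ∈ D} ⊆ h '' {k | k ∈ A ↔ k ∈ h ⁻¹' D} ∪ (Set.range h)ᶜ := by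
  rintro n hn
  by_cases hnR : n ∈ Set.range h
  · obtain ⟨k, rfl⟩ := hnR
    exact Or.inl ⟨k, hinj.mem_set_image.symm.trans hn, rfl⟩
  · exact Or.inr hnR

end Function.Injective

lemma coarselyComputableAt_zero (A : Set ℕ) : CoarselyComputableAt A 0 :=
  ⟨∅, isComputableSet_empty, lowerDensity_nonneg _⟩

lemma CoarselyComputableAt.le_one {A : Set ℕ} {r : ℝ} (hA : CoarselyComputableAt A r) : r ≤ 1 :=
  let ⟨_, _, hr⟩ := hA
  hr.trans (lowerDensity_le_one _)

lemma StrictMono.coarselyComputableAt_image_iff {h : ℕ → ℕ} (hh : StrictMono h)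
    (hc : Computable h) {s : ℝ} (hs₀ : 0 < s) (hs : HasDensity (Set.range h) s) (A : Set ℕ)
    (t : ℝ) : CoarselyComputableAt A t ↔ CoarselyComputableAt (h '' A) (s * t + (1 - s)) := by
  constructor
  · rintro ⟨C, hC, ht⟩
    refine ⟨h '' C, hh.isComputableSet_image hc hC, ?_⟩
    rw [hh.injective.agree_image_image, hh.lowerDensity_image_union_compl_range hs]
    gcongr
  · rintro ⟨D, hD, ht⟩
    refine ⟨h ⁻¹' D, hD.preimage hc, ?_⟩
    have := ht.trans (lowerDensity_mono (hh.injective.agree_image_subset A D))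
    rw [hh.lowerDensity_image_union_compl_range hs] at this
    exact le_of_mul_le_mul_left (by linarith) hs₀

lemma gammaBound_eq_of_coarselyComputableAt_iff {A B : Set ℕ} (e : ℝ ≃o ℝ)
    (he : ∀ t, CoarselyComputableAt A t ↔ CoarselyComputableAt B (e t)) :
    gammaBound B = e (gammaBound A) := by
  have himage : {r | CoarselyComputableAt B r} = e '' {t | CoarselyComputableAt A t} := by
    ext r
    rw [e.image_eq_preimage_symm]
    simp [he]
  rw [gammaBound, himage]
  exact (e.map_csSup' ⟨0, coarselyComputableAt_zero A⟩
    ⟨1, fun _ => CoarselyComputableAt.le_one⟩).symm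

theorem coarse_spectrum_scaling_general (A : Set ℕ) (s : ℝ) (h : ℕ → ℕ) (R : Set ℕ)
    (hs0 : 0 < s) (hRd : HasDensity R s)
    (hmono : StrictMono h) (hcomp : Computable h) (hrange : Set.range h = R) :
    (∀ t : ℝ, 0 ≤ t → t ≤ 1 →
      (CoarselyComputableAt A t ↔ CoarselyComputableAt (h '' A) (s * t + (1 - s)))) ∧
    gammaBound (h '' A) = s * gammaBound A + (1 - s) := by
  subst hrange
  have key := hmono.coarselyComputableAt_image_iff hcomp hs0 hRd A
  exact ⟨fun t _ _ => key t, gammaBound_eq_of_coarselyComputableAt_iff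
    ((OrderIso.mulLeft₀ s hs0).trans (OrderIso.addRight (1 - s))) key⟩

theorem coarse_spectrum_scaling (A : Set ℕ) (s : ℝ) (h : ℕ → ℕ) (R : Set ℕ)
    (hs0 : 0 < s) (hs1 : s ≤ 1) (hR : IsComputableSet R) (hRd : HasDensity R s)
    (hmono : StrictMono h) (hcomp : Computable h) (hrange : Set.range h = R) :
    (∀ t : ℝ, 0 ≤ t → t ≤ 1 →
      (CoarselyComputableAt A t ↔ CoarselyComputableAt (h '' A) (s * t + (1 - s)))) ∧
    gammaBound (h '' A) = s * gammaBound A + (1 - s) :=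
  coarse_spectrum_scaling_general A s h R hs0 hRd hmono hcomp hrange
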